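/- Let (A, B) be a suitable pair of sequences of positive integers, A = (a_1, …, a_p), B = (b_1, …, b_p), with compound sequence C(A,B) = (n_0, …, n_p), and fix an index i with 0 ≤ i ≤ p. Then the sequence T = (n_i, n_{i−1}, …, n_1, n_0, n_{i+1}, n_{i+2}, …, n_p), obtained by reversing the order of the first i+1 terms, is a telescopic sequence generating the same numerical semigroup, and c(T) = (b_i, b_{i−1}, …, b_1, a_{i+1}, a_{i+2}, …, a_p). -/
import Mathlib

/-- The monoid `⟨t_0, …, t_{n-1}⟩` of all nonnegative integer linear combinations of
the first `n` terms of the sequence `t`. -/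
def genBy (t : ℕ → ℕ) (n : ℕ) : Set ℕ :=
  {s | ∃ x : ℕ → ℕ, s = ∑ i ∈ Finset.range n, x i * t i}

/-- `d_i = gcd(t_0, …, t_i)`. -/
def seqD (t : ℕ → ℕ) (i : ℕ) : ℕ := Finset.gcd (Finset.range (i + 1)) t

/-- `c_j = d_{j-1} / d_j` (for `j ≥ 1`). -/
def seqC (t : ℕ → ℕ) (j : ℕ) : ℕ := seqD t (j - 1) / seqD t j

/-- The sequence `(t_0, …, t_k)` of positive integers is telescopic if
`c_j · t_j ∈ ⟨t_0, …, t_{j-1}⟩` for every `j = 1, …, k`. -/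
def IsTelescopic (t : ℕ → ℕ) (k : ℕ) : Prop :=
  (∀ i ≤ k, 0 < t i) ∧ ∀ j, 1 ≤ j → j ≤ k → seqC t j * t j ∈ genBy t j

/-- `(A, B)` (with terms indexed `1, …, p`) is a suitable pair of sequences of positive
integers: `gcd (A i) (B j) = 1` for all `j ≤ i`. -/
def IsSuitablePair (A B : ℕ → ℕ) (p : ℕ) : Prop :=
  (∀ i, 1 ≤ i → i ≤ p → 0 < A i ∧ 0 < B i) ∧
    ∀ i j, 1 ≤ j → j ≤ i → i ≤ p → Nat.gcd (A i) (B j) = 1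

/-- The compound sequence `C(A,B) = (n_0, …, n_p)`: `n_i = b_1 ⋯ b_i · a_{i+1} ⋯ a_p`
(equivalently `n_0 = a_1 ⋯ a_p` and `n_i = n_{i-1} b_i / a_i`). -/
def compoundSeq (A B : ℕ → ℕ) (p : ℕ) (i : ℕ) : ℕ :=
  (∏ j ∈ Finset.Icc 1 i, B j) * ∏ j ∈ Finset.Icc (i + 1) p, A j

/- ### Auxiliary lemmas -/

lemma seqD_succ (t : ℕ → ℕ) (j : ℕ) : seqD t (j+1) = Nat.gcd (t (j+1)) (seqD t j) := by
  unfold seqD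
  rw [Finset.range_add_one, Finset.gcd_insert]
  rfl

lemma icc_split (A : ℕ → ℕ) {a b c : ℕ} (h1 : a ≤ b) (h2 : b ≤ c) :
    (∏ j ∈ Finset.Icc (a+1) c, A j)
      = (∏ j ∈ Finset.Icc (a+1) b, A j) * ∏ j ∈ Finset.Icc (b+1) c, A j := by
  rw [Finset.Icc_add_one_left_eq_Ioc, Finset.Icc_add_one_left_eq_Ioc, Finset.Icc_add_one_left_eq_Ioc,
    Finset.prod_Ioc_consecutive _ h1 h2]

lemma icc_bot (A : ℕ → ℕ) {a c : ℕ} (h : a + 1 ≤ c) :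
    (∏ j ∈ Finset.Icc (a+1) c, A j) = A (a+1) * ∏ j ∈ Finset.Icc (a+2) c, A j := by
  rw [← Finset.Ico_add_one_right_eq_Icc, Finset.prod_eq_prod_Ico_succ_bot (by omega), Finset.Ico_add_one_right_eq_Icc]

lemma prodA_pos {A B : ℕ → ℕ} {p : ℕ} (hsuit : IsSuitablePair A B p) (a : ℕ) :
    0 < ∏ m ∈ Finset.Icc (a+1) p, A m := by
  apply Finset.prod_pos
  intro m hm
  rw [Finset.mem_Icc] at hm
  exact (hsuit.1 m (by omega) hm.2).1

lemma prodB_pos {A B : ℕ → ℕ} {p : ℕ} (hsuit : IsSuitablePair A B p) {b : ℕ} (hb : b ≤ p) :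
    0 < ∏ m ∈ Finset.Icc 1 b, B m := by
  apply Finset.prod_pos
  intro m hm
  rw [Finset.mem_Icc] at hm
  exact (hsuit.1 m hm.1 (by omega)).2

lemma compound_pos {A B : ℕ → ℕ} {p : ℕ} (hsuit : IsSuitablePair A B p) {k : ℕ} (hk : k ≤ p) :
    0 < compoundSeq A B p k :=
  Nat.mul_pos (prodB_pos hsuit hk) (prodA_pos hsuit k)

lemma compound_step {A B : ℕ → ℕ} {p : ℕ} {k : ℕ} (h1 : 1 ≤ k) (h2 : k ≤ p) :
    A k * compoundSeq A B p k = B k * compoundSeq A B p (k - 1) := by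
  obtain ⟨k', rfl⟩ := Nat.exists_eq_succ_of_ne_zero (by omega : k ≠ 0)
  unfold compoundSeq
  rw [show k' + 1 - 1 = k' from rfl]
  rw [Finset.prod_Icc_succ_top (by omega : 1 ≤ k' + 1), icc_bot A h2]
  ring

lemma mul_mem_genBy (t : ℕ → ℕ) (c m n : ℕ) (h : m < n) : c * t m ∈ genBy t n := by
  refine ⟨fun l => if l = m then c else 0, ?_⟩
  rw [Finset.sum_eq_single m]
  · simp
  · intro b _ hb; simp [hb]
  · intro hm; exact absurd (Finset.mem_range.2 h) hm

lemma seqD_rev (A B : ℕ → ℕ) (p : ℕ) (hsuit : IsSuitablePair A B p) (i : ℕ) (hip : i ≤ p) :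
    ∀ j, j ≤ p →
      seqD (fun j => if j ≤ i then compoundSeq A B p (i - j) else compoundSeq A B p j) j
        = (∏ m ∈ Finset.Icc 1 (i - j), B m) * ∏ m ∈ Finset.Icc (max i j + 1) p, A m := by
  intro j
  induction j with
  | zero =>
    intro _
    have : seqD (fun j => if j ≤ i then compoundSeq A B p (i - j) else compoundSeq A B p j) 0
        = compoundSeq A B p i := by simp [seqD]
    rw [this]
    simp [compoundSeq]
  | succ j ih =>
    intro hjp
    rw [seqD_succ, ih (by omega)]
    by_cases h : j + 1 ≤ i
    · simp only [if_pos h]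
      have hmax1 : max i j = i := by omega
      have hmax2 : max i (j+1) = i := by omega
      rw [hmax1, hmax2]
      have e1 : compoundSeq A B p (i - (j+1)) =
          ((∏ m ∈ Finset.Icc 1 (i-(j+1)), B m) * ∏ m ∈ Finset.Icc (i+1) p, A m)
            * ∏ m ∈ Finset.Icc (i-(j+1)+1) i, A m := by
        unfold compoundSeq
        rw [icc_split A (show i-(j+1) ≤ i by omega) hip]; ring
      have e2 : (∏ m ∈ Finset.Icc 1 (i - j), B m) * ∏ m ∈ Finset.Icc (i+1) p, A m =
          ((∏ m ∈ Finset.Icc 1 (i-(j+1)), B m) * ∏ m ∈ Finset.Icc (i+1) p, A m)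
            * B (i - j) := by
        rw [show i - j = (i - (j+1)) + 1 by omega, Finset.prod_Icc_succ_top (by omega)]
        ring
      rw [e1, e2, Nat.gcd_mul_left]
      have hcop : Nat.Coprime (∏ m ∈ Finset.Icc (i-(j+1)+1) i, A m) (B (i - j)) := by
        apply Nat.Coprime.prod_left
        intro m hm
        rw [Finset.mem_Icc] at hm
        exact hsuit.2 m (i - j) (by omega) (by omega) (by omega)
      rw [hcop, mul_one]
    · simp only [if_neg h]
      have hij : i ≤ j := by omega
      have e2 : (∏ m ∈ Finset.Icc 1 (i - j), B m) * ∏ m ∈ Finset.Icc (max i j + 1) p, A m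
          = (∏ m ∈ Finset.Icc (j+2) p, A m) * A (j+1) := by
        rw [show i - j = 0 by omega, show max i j = j by omega,
          show Finset.Icc 1 0 = ∅ by rfl, Finset.prod_empty, one_mul, icc_bot A hjp]
        ring
      have e1 : compoundSeq A B p (j+1)
          = (∏ m ∈ Finset.Icc (j+2) p, A m) * ∏ m ∈ Finset.Icc 1 (j+1), B m := by
        unfold compoundSeq; ring
      rw [e1, e2, Nat.gcd_mul_left]
      have hcop : Nat.Coprime (∏ m ∈ Finset.Icc 1 (j+1), B m) (A (j+1)) := by
        apply Nat.Coprime.prod_left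
        intro m hm
        rw [Finset.mem_Icc] at hm
        exact Nat.Coprime.symm (hsuit.2 (j+1) m (by omega) (by omega) (by omega))
      rw [hcop, mul_one]
      rw [show i - (j+1) = 0 by omega, show max i (j+1) = j + 1 by omega,
        show Finset.Icc 1 0 = ∅ by rfl, Finset.prod_empty, one_mul]

/-- For `(A, B)` a suitable pair with `C(A,B) = (n_0, …, n_p)` and `0 ≤ i ≤ p`, the
sequence `T = (n_i, n_{i-1}, …, n_1, n_0, n_{i+1}, …, n_p)` obtained by reversing the
first `i + 1` terms is telescopic, generates the same numerical semigroup, and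
`c(T) = (b_i, b_{i-1}, …, b_1, a_{i+1}, …, a_p)`. -/
theorem reversed_compound_telescopic (A B : ℕ → ℕ) (p : ℕ)
    (hsuit : IsSuitablePair A B p) (i : ℕ) (hip : i ≤ p) :
    IsTelescopic (fun j => if j ≤ i then compoundSeq A B p (i - j) else compoundSeq A B p j) p ∧
      genBy (fun j => if j ≤ i then compoundSeq A B p (i - j) else compoundSeq A B p j) (p + 1)
        = genBy (compoundSeq A B p) (p + 1) ∧
      ∀ j, 1 ≤ j → j ≤ p →
        seqC (fun j => if j ≤ i then compoundSeq A B p (i - j) else compoundSeq A B p j) j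
          = if j ≤ i then B (i + 1 - j) else A j := by
  set T : ℕ → ℕ := fun j => if j ≤ i then compoundSeq A B p (i - j) else compoundSeq A B p j
    with hT
  have hD := seqD_rev A B p hsuit i hip
  rw [← hT] at hD
  -- the c-sequence formula
  have hC : ∀ j, 1 ≤ j → j ≤ p → seqC T j = if j ≤ i then B (i + 1 - j) else A j := by
    intro j h1 h2
    obtain ⟨j', rfl⟩ := Nat.exists_eq_succ_of_ne_zero (by omega : j ≠ 0)
    unfold seqC
    rw [show j' + 1 - 1 = j' from rfl]
    rw [hD j' (by omega), hD (j'+1) h2]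
    by_cases h : j' + 1 ≤ i
    · rw [if_pos h, show max i j' = i by omega, show max i (j'+1) = i by omega,
        show i - j' = (i - (j'+1)) + 1 by omega, Finset.prod_Icc_succ_top (by omega)]
      have hpos : 0 < (∏ m ∈ Finset.Icc 1 (i-(j'+1)), B m) * ∏ m ∈ Finset.Icc (i+1) p, A m :=
        Nat.mul_pos (prodB_pos hsuit (by omega)) (prodA_pos hsuit i)
      rw [show (∏ m ∈ Finset.Icc 1 (i-(j'+1)), B m) * B (i-(j'+1)+1)
            * ∏ m ∈ Finset.Icc (i+1) p, A m
          = ((∏ m ∈ Finset.Icc 1 (i-(j'+1)), B m) * ∏ m ∈ Finset.Icc (i+1) p, A m)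
            * B (i-(j'+1)+1) by ring,
        Nat.mul_div_cancel_left _ hpos]
      congr 1
      omega
    · rw [if_neg h, show max i j' = j' by omega, show max i (j'+1) = j' + 1 by omega,
        show i - j' = 0 by omega, show i - (j'+1) = 0 by omega,
        show Finset.Icc 1 0 = ∅ by rfl, Finset.prod_empty, one_mul, one_mul,
        icc_bot A h2,
        mul_comm (A (j'+1)), Nat.mul_div_cancel_left _ (prodA_pos hsuit (j'+1))]
  refine ⟨⟨?_, ?_⟩, ?_, hC⟩
  · -- positivity
    intro j hj
    by_cases h : j ≤ i
    · simpa [hT, h] using compound_pos hsuit (show i - j ≤ p by omega)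
    · simpa [hT, h] using compound_pos hsuit hj
  · -- telescopic membership
    intro j h1 h2
    obtain ⟨j', rfl⟩ := Nat.exists_eq_succ_of_ne_zero (by omega : j ≠ 0)
    rw [hC (j'+1) h1 h2]
    by_cases h : j' + 1 ≤ i
    · rw [if_pos h]
      have hkey : B (i + 1 - (j'+1)) * T (j'+1) = A (i - j') * T j' := by
        have t1 : T (j'+1) = compoundSeq A B p (i - (j'+1)) := by simp [hT, h]
        have t2 : T j' = compoundSeq A B p (i - j') := by simp [hT, show j' ≤ i by omega]
        rw [t1, t2, show i + 1 - (j'+1) = i - j' by omega,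
          show i - (j'+1) = i - j' - 1 by omega,
          ← compound_step (show 1 ≤ i - j' by omega) (show i - j' ≤ p by omega)]
      rw [hkey]
      exact mul_mem_genBy T _ j' (j'+1) (by omega)
    · rw [if_neg h]
      set m₀ : ℕ := if j' ≤ i then 0 else j' with hm₀
      have hkey : A (j'+1) * T (j'+1) = B (j'+1) * T m₀ := by
        have hs := compound_step (A := A) (B := B) (p := p)
          (show 1 ≤ j' + 1 by omega) h2
        simp only [Nat.add_sub_cancel] at hs
        have hTj : T (j'+1) = compoundSeq A B p (j'+1) := by simp [hT, h]
        have hTm : T m₀ = compoundSeq A B p j' := by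
          by_cases hc : j' ≤ i
          · have : j' = i := by omega
            simp [hm₀, hc, hT, this]
          · simp [hm₀, hc, hT]
        rw [hTj, hTm, hs]
      rw [hkey]
      exact mul_mem_genBy T _ m₀ (j'+1) (by simp only [hm₀]; split <;> omega)
  · -- same semigroup
    have hswap : ∀ (x t : ℕ → ℕ),
        ∑ j ∈ Finset.range (p+1), x j * t (if j ≤ i then i - j else j)
          = ∑ j ∈ Finset.range (p+1), x (if j ≤ i then i - j else j) * t j := by
      intro x t
      apply Finset.sum_nbij' (i := fun a => if a ≤ i then i - a else a)
        (j := fun a => if a ≤ i then i - a else a)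
      · intro a ha; simp only [Finset.mem_range] at *; split <;> omega
      · intro a ha; simp only [Finset.mem_range] at *; split <;> omega
      · intro a _; split <;> [skip; rfl] <;> split <;> omega
      · intro a _; split <;> [skip; rfl] <;> split <;> omega
      · intro a _
        by_cases hc : a ≤ i
        · simp only [hc, if_pos, if_pos (show i - a ≤ i by omega)]
          congr 2
          omega
        · simp [hc]
    have hTn : ∀ (x : ℕ → ℕ) (j : ℕ), x j * T j
        = x j * compoundSeq A B p (if j ≤ i then i - j else j) := by
      intro x j
      by_cases hc : j ≤ i <;> simp [hT, hc]
    have hnT : ∀ (x : ℕ → ℕ) (j : ℕ), x j * compoundSeq A B p j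
        = x j * T (if j ≤ i then i - j else j) := by
      intro x j
      by_cases hc : j ≤ i
      · simp only [hc, if_pos, hT]
        rw [if_pos (show i - j ≤ i by omega), show i - (i - j) = j by omega]
      · simp [hT, hc]
    ext s
    constructor
    · rintro ⟨x, rfl⟩
      refine ⟨fun l => x (if l ≤ i then i - l else l), ?_⟩
      calc ∑ j ∈ Finset.range (p+1), x j * T j
          = ∑ j ∈ Finset.range (p+1), x j * compoundSeq A B p (if j ≤ i then i - j else j) := by
            exact Finset.sum_congr rfl fun j _ => hTn x j
        _ = _ := hswap x (compoundSeq A B p)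
    · rintro ⟨x, rfl⟩
      refine ⟨fun l => x (if l ≤ i then i - l else l), ?_⟩
      calc ∑ j ∈ Finset.range (p+1), x j * compoundSeq A B p j
          = ∑ j ∈ Finset.range (p+1), x j * T (if j ≤ i then i - j else j) := by
            exact Finset.sum_congr rfl fun j _ => hnT x j
        _ = _ := hswap x T
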